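/- arXiv:1908.02185 — 3 statements merged into one kernel-verified Lean document; each statement's English description precedes it below -/
import Mathlib

section
/- Let G : ℝ → Matrix (Fin N) (Fin N) ℝ be a smooth curve of symmetric positive definite matrices, and let σ : ℝ → Matrix (Fin N) (Fin N) ℝ be smooth with σ(y)ᵀ = G(y) σ(y) G(y)⁻¹ for all y. Define D_y σ = σ' + (1/2)[G⁻¹ G', σ] (commutator bracket). Then (D_y σ)ᵀ = G (D_y σ) G⁻¹, i.e. D_y σ is again G-self-adjoint. -/
open Matrix

attribute [local instance] Matrix.normedAddCommGroup Matrix.normedSpace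

private lemma hasDerivAt_matrix {N : ℕ} {f : ℝ → Matrix (Fin N) (Fin N) ℝ}
    {f' : Matrix (Fin N) (Fin N) ℝ} {y : ℝ} :
    HasDerivAt f f' y ↔ ∀ i j, HasDerivAt (fun y => f y i j) (f' i j) y := by
  refine hasDerivAt_pi.trans ?_
  exact forall_congr' fun i => hasDerivAt_pi

private lemma HasDerivAt.matrix_mul {N : ℕ} {A B : ℝ → Matrix (Fin N) (Fin N) ℝ}
    {A' B' : Matrix (Fin N) (Fin N) ℝ} {y : ℝ}
    (hA : HasDerivAt A A' y) (hB : HasDerivAt B B' y) :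
    HasDerivAt (fun y => A y * B y) (A' * B y + A y * B') y := by
  rw [hasDerivAt_matrix] at *
  intro i j
  have h : HasDerivAt (fun y => ∑ k, A y i k * B y k j)
      (∑ k, (A' i k * B y k j + A y i k * B' k j)) y :=
    HasDerivAt.fun_sum fun k _ => (hA i k).mul (hB k j)
  simpa [Matrix.mul_apply, Matrix.add_apply, Finset.sum_add_distrib] using h

private lemma HasDerivAt.matrix_transpose {N : ℕ} {A : ℝ → Matrix (Fin N) (Fin N) ℝ}
    {A' : Matrix (Fin N) (Fin N) ℝ} {y : ℝ} (hA : HasDerivAt A A' y) :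
    HasDerivAt (fun y => (A y)ᵀ) A'ᵀ y := by
  rw [hasDerivAt_matrix] at *
  intro i j
  simpa using hA j i

/-- If `σ(y)` is `G(y)`-self-adjoint (`σᵀ = G σ G⁻¹`), then the covariant derivative
`D_y σ = σ' + ½[G⁻¹G', σ]` is again `G`-self-adjoint. -/
theorem covDeriv_selfAdjoint {N : ℕ} (G σ : ℝ → Matrix (Fin N) (Fin N) ℝ)
    (hG : ContDiff ℝ (⊤ : ℕ∞) G) (hσ : ContDiff ℝ (⊤ : ℕ∞) σ)
    (hGpd : ∀ y, (G y).PosDef) (hGsymm : ∀ y, (G y).IsSymm)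
    (hsa : ∀ y, (σ y)ᵀ = G y * σ y * (G y)⁻¹) (y : ℝ) :
    (deriv σ y + (1/2 : ℝ) •
        ((G y)⁻¹ * deriv G y * σ y - σ y * ((G y)⁻¹ * deriv G y)))ᵀ
      = G y * (deriv σ y + (1/2 : ℝ) •
          ((G y)⁻¹ * deriv G y * σ y - σ y * ((G y)⁻¹ * deriv G y))) * (G y)⁻¹ := by
  have hdet : ∀ z, IsUnit (G z).det := fun z =>
    isUnit_iff_ne_zero.mpr (hGpd z).det_pos.ne'
  have hdG : HasDerivAt G (deriv G y) y := (hG.differentiable (by simp) y).hasDerivAt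
  have hdσ : HasDerivAt σ (deriv σ y) y := (hσ.differentiable (by simp) y).hasDerivAt
  have h1 : (G y)⁻¹ * G y = 1 := Matrix.nonsing_inv_mul _ (hdet y)
  have h2 : G y * (G y)⁻¹ = 1 := Matrix.mul_nonsing_inv _ (hdet y)
  have hSg : ∀ z, (σ z)ᵀ * G z = G z * σ z := by
    intro z
    rw [hsa z, mul_assoc, Matrix.nonsing_inv_mul _ (hdet z), mul_one]
  -- differentiate σᵀ G = G σ
  have key : (deriv σ y)ᵀ * G y + (σ y)ᵀ * deriv G y
      = deriv G y * σ y + G y * deriv σ y := by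
    have hL : HasDerivAt (fun z => (σ z)ᵀ * G z)
        ((deriv σ y)ᵀ * G y + (σ y)ᵀ * deriv G y) y :=
      (hdσ.matrix_transpose).matrix_mul hdG
    have hfun : (fun z => (σ z)ᵀ * G z) = fun z => G z * σ z := funext hSg
    rw [hfun] at hL
    exact hL.unique (hdG.matrix_mul hdσ)
  have hg'symm : (deriv G y)ᵀ = deriv G y := by
    have hT : HasDerivAt (fun z => (G z)ᵀ) (deriv G y)ᵀ y := hdG.matrix_transpose
    have hfun : (fun z => (G z)ᵀ) = G := funext fun z => (hGsymm z)
    rw [hfun] at hT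
    exact hT.unique hdG
  have hgisymm : ((G y)⁻¹)ᵀ = (G y)⁻¹ := by
    rw [Matrix.transpose_nonsing_inv, (hGsymm y).eq]
  -- reduce to the identity multiplied on the right by G y
  set T := deriv σ y + (1/2 : ℝ) •
      ((G y)⁻¹ * deriv G y * σ y - σ y * ((G y)⁻¹ * deriv G y)) with hT
  suffices h : Tᵀ * G y = G y * T by
    have : Tᵀ = Tᵀ * (G y * (G y)⁻¹) := by rw [h2, mul_one]
    rw [this, ← mul_assoc, h]
  have hSg' : (σ y)ᵀ * deriv G y
      = G y * (σ y * ((G y)⁻¹ * deriv G y)) := by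
    rw [hsa y]; simp [mul_assoc]
  have key2 : (deriv σ y)ᵀ * G y
      = deriv G y * σ y + G y * deriv σ y
        - G y * (σ y * ((G y)⁻¹ * deriv G y)) := by
    rw [← hSg']; exact eq_sub_of_add_eq key
  rw [hT]
  simp only [transpose_add, transpose_smul, transpose_sub, transpose_mul,
    hg'symm, hgisymm, hsa y, add_mul, sub_mul, smul_mul_assoc, mul_add, mul_sub,
    mul_assoc, h1, h2, mul_one, one_mul,
    Matrix.nonsing_inv_mul_cancel_left _ _ (hdet y),
    Matrix.mul_nonsing_inv_cancel_left _ _ (hdet y)]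
  rw [← mul_assoc, key2]
  simp only [mul_smul_comm, smul_mul_assoc, mul_sub, mul_assoc,
    Matrix.mul_nonsing_inv_cancel_left _ _ (hdet y),
    Matrix.nonsing_inv_mul_cancel_left _ _ (hdet y)]
  module
end

section
/- Suppose L, H : (0,t₀] × X → ℝ with H depending only on t, H < 0, H differentiable and increasing, and for each fixed t the function L(t,·) on the compact manifold X satisfies ∂H/∂t = −Δ_h L + L·(|K⁰|² + (1/n)H²) with |K⁰|² ≥ 0 and L > 0. Then L(t,x) ≤ (n/H(t)²) · ∂H/∂t(t) for all x ∈ X. -/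
/-- Maximum-principle upper bound on the CMC lapse: on a compact space `X`, if
`∂H/∂t = −Δ L + L(|K⁰|² + H²/n)` with `|K⁰|² ≥ 0`, `L > 0`, `H < 0`, and the
Laplacian satisfies `Δ L ≤ 0` at any maximum point of `L` (geometer's sign
convention), then `L ≤ (n/H²) ∂H/∂t` everywhere. -/
theorem lapse_upper_bound {X : Type*} [TopologicalSpace X] [CompactSpace X]
    [Nonempty X] (n : ℕ) (hn : 0 < n)
    (L K0sq : X → ℝ) (Δ : (X → ℝ) → X → ℝ) (H dH : ℝ)
    (hH : H < 0) (hLc : Continuous L) (hLpos : ∀ x, 0 < L x)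
    (hK0 : ∀ x, 0 ≤ K0sq x)
    (hMP : ∀ x, IsMaxOn L Set.univ x → Δ L x ≤ 0)
    (heq : ∀ x, dH = -(Δ L x) + L x * (K0sq x + H^2 / n)) :
    ∀ x, L x ≤ ((n : ℝ) / H^2) * dH := by
  obtain ⟨x₀, -, hmax⟩ := IsCompact.exists_isMaxOn isCompact_univ
    Set.univ_nonempty hLc.continuousOn
  have hΔ : Δ L x₀ ≤ 0 := hMP x₀ hmax
  have hH2 : (0:ℝ) < H^2 := by nlinarith
  have hnpos : (0:ℝ) < n := by exact_mod_cast hn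
  intro x
  have hLx : L x ≤ L x₀ := hmax (Set.mem_univ x)
  have key : L x₀ * (H^2 / n) ≤ dH := by
    rw [heq x₀]
    nlinarith [hLpos x₀, hK0 x₀]
  rw [div_mul_eq_mul_div, le_div_iff₀ hH2]
  calc L x * H^2 ≤ L x₀ * H^2 := by nlinarith
    _ ≤ n * dH := by
        have : (n:ℝ) * (L x₀ * (H^2 / n)) = L x₀ * H^2 := by field_simp
        nlinarith
end

section
/- Suppose L, H as above satisfy ∂H/∂t = −Δ_h L + L H² + L R on a compact Riemannian manifold (X, h) with R ≤ 0, H < 0 constant in space, L > 0. Then L(t,x) ≥ (1/H(t)²) · ∂H/∂t(t) for all x ∈ X. -/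
/-- Minimum-principle lower bound on the CMC lapse (Proposition 2.30): on a compact
space `X`, if `∂H/∂t = −Δ L + L H² + L R` with `R ≤ 0`, `L > 0`, `H < 0`, and the
Laplacian satisfies `Δ L ≥ 0` at any minimum point of `L` (geometer's sign
convention), then `L ≥ (1/H²) ∂H/∂t` everywhere. -/
theorem lapse_lower_bound {X : Type*} [TopologicalSpace X] [CompactSpace X]
    [Nonempty X]
    (L R : X → ℝ) (Δ : (X → ℝ) → X → ℝ) (H dH : ℝ)
    (hH : H < 0) (hLc : Continuous L) (hLpos : ∀ x, 0 < L x)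
    (hR : ∀ x, R x ≤ 0)
    (hMP : ∀ x, IsMinOn L Set.univ x → 0 ≤ Δ L x)
    (heq : ∀ x, dH = -(Δ L x) + L x * H^2 + L x * R x) :
    ∀ x, (1 / H^2) * dH ≤ L x := by
  obtain ⟨x0, -, hmin⟩ := CompactSpace.isCompact_univ.exists_isMinOn
    Set.univ_nonempty hLc.continuousOn
  intro x
  have hne : H ≠ 0 := hH.ne
  have hH2 : 0 < H ^ 2 := by positivity
  have h1 : dH ≤ L x0 * H ^ 2 := by
    have h2 := hMP x0 hmin
    have h3 : L x0 * R x0 ≤ 0 :=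
      mul_nonpos_of_nonneg_of_nonpos (hLpos x0).le (hR x0)
    nlinarith [heq x0]
  have h4 : (1 / H ^ 2) * dH ≤ L x0 := by
    rw [div_mul_eq_mul_div, div_le_iff₀ hH2]; linarith
  exact h4.trans (hmin (Set.mem_univ x))
end
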